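/- Let n, s, f be natural numbers with n = s + f, n ≥ 1, and z > 0. The Wilson lower bound W(s,n) = (s + z²/2)/(n + z²) - (z/(n + z²))·√(s f/n + z²/4) is monotone nondecreasing in s for fixed n, i.e., if s ≤ s' ≤ n then W(s,n) ≤ W(s',n). -/
import Mathlib

lemma aux_sqrt_mono (z a b d : ℝ) (hz : 0 < z) (hd : 0 ≤ d)
    (ha : z ^ 2 / 4 ≤ a) (hb : z ^ 2 / 4 ≤ b) (hab : b - a ≤ d) :
    z * Real.sqrt b ≤ d + z * Real.sqrt a := by
  have ha0 : 0 ≤ a := by nlinarith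
  have hb0 : 0 ≤ b := by nlinarith
  have hsa : z / 2 ≤ Real.sqrt a := by
    rw [show z/2 = Real.sqrt ((z/2)^2) from (Real.sqrt_sq (by linarith)).symm]
    apply Real.sqrt_le_sqrt; nlinarith
  have hsb : z / 2 ≤ Real.sqrt b := by
    rw [show z/2 = Real.sqrt ((z/2)^2) from (Real.sqrt_sq (by linarith)).symm]
    apply Real.sqrt_le_sqrt; nlinarith
  have h2a : Real.sqrt a ^ 2 = a := Real.sq_sqrt ha0
  have h2b : Real.sqrt b ^ 2 = b := Real.sq_sqrt hb0
  rcases le_total b a with h | h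
  · have : Real.sqrt b ≤ Real.sqrt a := Real.sqrt_le_sqrt h
    nlinarith
  · have h1 : Real.sqrt a ≤ Real.sqrt b := Real.sqrt_le_sqrt h
    have h2 : z ≤ Real.sqrt a + Real.sqrt b := by linarith
    nlinarith

theorem stmt_14 (n : ℕ) (hn : 1 ≤ n) (z : ℝ) (hz : 0 < z)
    (s s' : ℕ) (hss' : s ≤ s') (hs'n : s' ≤ n) :
    ((s : ℝ) + z ^ 2 / 2) / ((n : ℝ) + z ^ 2)
        - (z / ((n : ℝ) + z ^ 2)) * Real.sqrt ((s : ℝ) * ((n : ℝ) - s) / (n : ℝ) + z ^ 2 / 4)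
      ≤ ((s' : ℝ) + z ^ 2 / 2) / ((n : ℝ) + z ^ 2)
        - (z / ((n : ℝ) + z ^ 2)) * Real.sqrt ((s' : ℝ) * ((n : ℝ) - s') / (n : ℝ) + z ^ 2 / 4) := by
  have hn' : (1:ℝ) ≤ (n:ℝ) := by exact_mod_cast hn
  have hnpos : (0:ℝ) < n := by linarith
  have hss : (s:ℝ) ≤ (s':ℝ) := by exact_mod_cast hss'
  have hsn : (s':ℝ) ≤ (n:ℝ) := by exact_mod_cast hs'n
  have hs0 : (0:ℝ) ≤ (s:ℝ) := Nat.cast_nonneg s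
  set A : ℝ := (s : ℝ) * ((n : ℝ) - s) / (n : ℝ) + z ^ 2 / 4 with hA
  set A' : ℝ := (s' : ℝ) * ((n : ℝ) - s') / (n : ℝ) + z ^ 2 / 4 with hA'
  have hAz : z^2/4 ≤ A := by
    have : 0 ≤ (s : ℝ) * ((n : ℝ) - s) / (n : ℝ) := by
      apply div_nonneg _ hnpos.le; nlinarith
    linarith
  have hAz' : z^2/4 ≤ A' := by
    have : 0 ≤ (s' : ℝ) * ((n : ℝ) - s') / (n : ℝ) := by
      apply div_nonneg _ hnpos.le; nlinarith
    linarith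
  have hdiff : A' - A ≤ (s':ℝ) - s := by
    have he : A' - A = ((s':ℝ) * ((n:ℝ) - s') - (s:ℝ) * ((n:ℝ) - s)) / (n:ℝ) := by
      rw [hA, hA']; ring
    rw [he, div_le_iff₀ hnpos]; nlinarith
  have key : z * Real.sqrt A' ≤ ((s':ℝ) - s) + z * Real.sqrt A :=
    aux_sqrt_mono z A A' _ hz (by linarith) hAz hAz' hdiff
  have hD : (0:ℝ) < (n:ℝ) + z^2 := by nlinarith
  have e1 : ((s : ℝ) + z ^ 2 / 2) / ((n : ℝ) + z ^ 2)
      - (z / ((n : ℝ) + z ^ 2)) * Real.sqrt A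
      = ((s : ℝ) + z ^ 2 / 2 - z * Real.sqrt A) / ((n : ℝ) + z ^ 2) := by ring
  have e2 : ((s' : ℝ) + z ^ 2 / 2) / ((n : ℝ) + z ^ 2)
      - (z / ((n : ℝ) + z ^ 2)) * Real.sqrt A'
      = ((s' : ℝ) + z ^ 2 / 2 - z * Real.sqrt A') / ((n : ℝ) + z ^ 2) := by ring
  rw [e1, e2, div_le_div_iff₀ hD hD]
  nlinarith [key, hD]
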